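/- A voting by quota f^q (with quotas q_k, 1 ≤ q_k ≤ n, for each object k) on the universal domain of strict preferences on 2^K is not obviously manipulable if and only if 2 ≤ q_k ≤ n−1 for every k ∈ K. -/

import Mathlib

/-- A preference profile: each agent `i : Fin n` has a strict preference,
modeled as a linear order on the set of alternatives `X`. -/
abbrev Profile (n : ℕ) (X : Type*) := Fin n → LinearOrder X

/-- The top (best) alternative of a preference `L`. -/
noncomputable def top {X : Type*} [Fintype X] [Nonempty X] (L : LinearOrder X) : X :=
  @Finset.max' X L Finset.univ Finset.univ_nonempty

/-- `x` is strictly preferred to `y` according to `L`. -/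
def prefers {X : Type*} (L : LinearOrder X) (x y : X) : Prop := L.lt y x

/-- The option set left open by preference `L` of agent `i` at rule `f`. -/
def OptionSet {n : ℕ} {X : Type*} (f : Profile n X → X) (i : Fin n) (L : LinearOrder X) :
    Set X :=
  {x | ∃ P : Profile n X, P i = L ∧ f P = x}

/-- `Li'` is a profitable manipulation of `f` at (true preference) `Li` for agent `i`. -/
def IsManip {n : ℕ} {X : Type*} (f : Profile n X → X) (i : Fin n)
    (Li Li' : LinearOrder X) : Prop :=
  ∃ P : Profile n X, P i = Li ∧ prefers Li (f (Function.update P i Li')) (f P)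

/-- The worst element of `O(Li')` is strictly `Li`-preferred to the worst element of `O(Li)`.
For nonempty finite option sets this is equivalent to: some element of `O(Li)` is strictly
worse (w.r.t. `Li`) than every element of `O(Li')`. -/
def WorstImproves {n : ℕ} {X : Type*} (f : Profile n X → X) (i : Fin n)
    (Li Li' : LinearOrder X) : Prop :=
  ∃ w ∈ OptionSet f i Li, ∀ w' ∈ OptionSet f i Li', prefers Li w' w

/-- The best element of `O(Li')` is strictly `Li`-preferred to the best element of `O(Li)`.
For nonempty finite option sets this is equivalent to: some element of `O(Li')` is strictly
better (w.r.t. `Li`) than every element of `O(Li)`. -/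
def BestImproves {n : ℕ} {X : Type*} (f : Profile n X → X) (i : Fin n)
    (Li Li' : LinearOrder X) : Prop :=
  ∃ b' ∈ OptionSet f i Li', ∀ b ∈ OptionSet f i Li, prefers Li b' b

/-- `Li'` is an obvious manipulation of `f` at `Li` for agent `i`. -/
def IsObviousManip {n : ℕ} {X : Type*} (f : Profile n X → X) (i : Fin n)
    (Li Li' : LinearOrder X) : Prop :=
  IsManip f i Li Li' ∧ (WorstImproves f i Li Li' ∨ BestImproves f i Li Li')

/-- `f` is not obviously manipulable. -/
def NOM {n : ℕ} {X : Type*} (f : Profile n X → X) : Prop :=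
  ∀ (i : Fin n) (Li Li' : LinearOrder X), ¬ IsObviousManip f i Li Li'

/-- `f` is tops-only. -/
def TopsOnly {n : ℕ} {X : Type*} [Fintype X] [Nonempty X] (f : Profile n X → X) : Prop :=
  ∀ P P' : Profile n X, (∀ i, top (P i) = top (P' i)) → f P = f P'

/-- The set `V_i` of alternatives that agent `i` vetoes via some preference. -/
def VetoSet {n : ℕ} {X : Type*} (f : Profile n X → X) (i : Fin n) : Set X :=
  {x | ∃ L : LinearOrder X, x ∉ OptionSet f i L}

/-- The set `SV_i` of alternatives strongly vetoed by agent `i`: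
`x` is vetoed via `L` precisely when the top of `L` differs from `x`. -/
def StrongVetoSet {n : ℕ} {X : Type*} [Fintype X] [Nonempty X]
    (f : Profile n X → X) (i : Fin n) : Set X :=
  {x | ∀ L : LinearOrder X, x ∉ OptionSet f i L ↔ top L ≠ x}

/-- `f` is dictatorial: some agent's top alternative is always selected. -/
def Dictatorial {n : ℕ} {X : Type*} [Fintype X] [Nonempty X]
    (f : Profile n X → X) : Prop :=
  ∃ i : Fin n, ∀ P : Profile n X, f P = top (P i)

/-- Voting by quota: object `k` is chosen iff at least `q k` agents have `k` in their
top set. Alternatives are subsets of the set `K` of objects. -/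
noncomputable def vbq {n : ℕ} {K : Type*} [Fintype K] [DecidableEq K]
    (q : K → ℕ) (P : Profile n (Finset K)) : Finset K :=
  Finset.univ.filter fun k =>
    q k ≤ (Finset.univ.filter fun i : Fin n => k ∈ top (P i)).card

/-!
If every quota lies in `[2, n - 1]`, each agent's option set is all of `2^K`: when the others
unanimously report a top `S`, every object of `S` has `n - 1` votes and every other object at
most one, so the outcome is `S` whatever the agent reports. Then neither the best nor the worst
element of an option set can move. Conversely, a quota `q k₀ = 1` (resp. `n`) lets a single agent
force `k₀` into (resp. out of) the outcome. Take a true preference whose worst alternative violates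
this constraint yet is reached at some profile; the constrained report then makes that alternative
impossible, which improves both the outcome at that profile and the worst element of the option
set.
-/

section Orders

variable {X : Type*} [Fintype X] [DecidableEq X]

lemma top_eq_of_forall_prefers [Nonempty X] {L : LinearOrder X} {t : X}
    (h : ∀ x, x ≠ t → prefers L t x) : top L = t := by
  let := L
  by_contra hne
  exact (h _ hne).not_ge (Finset.le_max' _ t (Finset.mem_univ t))

noncomputable def topBotKey (t b x : X) : ℕ ×ₗ Fin (Fintype.card X) :=
  toLex (if x = t then 2 else if x = b then 0 else 1, Fintype.equivFin X x)

lemma topBotKey_injective (t b : X) : Function.Injective (topBotKey t b) := fun _ _ h =>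
  (Fintype.equivFin X).injective (congrArg (fun p => (ofLex p).2) h)

noncomputable abbrev orderWithTopBot (t b : X) : LinearOrder X :=
  LinearOrder.lift' (topBotKey t b) (topBotKey_injective t b)

lemma prefers_orderWithTopBot {t b x y : X} :
    prefers (orderWithTopBot t b) x y ↔ topBotKey t b y < topBotKey t b x := Iff.rfl

lemma top_orderWithTopBot [Nonempty X] (t b : X) : top (orderWithTopBot t b) = t := by
  refine top_eq_of_forall_prefers fun x hx => ?_
  rw [prefers_orderWithTopBot, topBotKey, topBotKey, Prod.Lex.toLex_lt_toLex]
  left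
  simp only [hx, if_true, if_false]
  split_ifs <;> omega

lemma prefers_orderWithTopBot_bot {t b x : X} (htb : t ≠ b) (hx : x ≠ b) :
    prefers (orderWithTopBot t b) x b := by
  rw [prefers_orderWithTopBot, topBotKey, topBotKey, Prod.Lex.toLex_lt_toLex]
  left
  simp only [htb.symm, hx, if_true, if_false]
  split_ifs <;> omega

end Orders

lemma nom_of_forall_mem_optionSet {n : ℕ} {X : Type*} {f : Profile n X → X}
    (h : ∀ i L x, x ∈ OptionSet f i L) : NOM f := by
  rintro i L L' ⟨-, ⟨w, -, hw⟩ | ⟨b, -, hb⟩⟩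
  · exact @lt_irrefl X L.toPreorder w (hw w (h i L' w))
  · exact @lt_irrefl X L.toPreorder b (hb b (h i L b))

lemma isObviousManip_of_bot_mem_optionSet {n : ℕ} {X : Type*} {f : Profile n X → X} {i : Fin n}
    {L L' : LinearOrder X} {b : X} (hb : ∀ x, x ≠ b → prefers L x b)
    (hL : b ∈ OptionSet f i L) (hL' : b ∉ OptionSet f i L') : IsObviousManip f i L L' := by
  have hne : ∀ x ∈ OptionSet f i L', x ≠ b := fun x hx hxb => hL' (hxb ▸ hx)
  obtain ⟨P, hPi, hPb⟩ := hL
  refine ⟨⟨P, hPi, ?_⟩, Or.inl ⟨b, ⟨P, hPi, hPb⟩, fun x hx => hb x (hne x hx)⟩⟩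
  rw [hPb]
  exact hb _ (hne _ ⟨_, Function.update_self .., rfl⟩)

lemma not_nom_of_bot_mem_optionSet {n : ℕ} {X : Type*} [Fintype X] [DecidableEq X]
    {f : Profile n X → X} {i : Fin n} {L' : LinearOrder X} {t b : X} (htb : t ≠ b)
    (hb : b ∈ OptionSet f i (orderWithTopBot t b)) (hb' : b ∉ OptionSet f i L') : ¬ NOM f :=
  fun hnom => hnom i _ L'
    (isObviousManip_of_bot_mem_optionSet (fun _ => prefers_orderWithTopBot_bot htb) hb hb')

section Quota

open Finset

variable {n : ℕ} {K : Type*} [Fintype K] [DecidableEq K] {q : K → ℕ}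

lemma mem_vbq {P : Profile n (Finset K)} {k : K} :
    k ∈ vbq q P ↔ q k ≤ #{i | k ∈ top (P i)} := by
  simp [vbq]

lemma card_mem_top_update_const (L₀ L : LinearOrder (Finset K)) (i : Fin n) (k : K) :
    #{j | k ∈ top (Function.update (fun _ => L₀) i L j)} =
      (if k ∈ top L then 1 else 0) + (if k ∈ top L₀ then n - 1 else 0) := by
  rw [card_filter, ← add_sum_erase _ _ (mem_univ i), Function.update_self,
    sum_congr rfl fun j hj => by rw [Function.update_of_ne (ne_of_mem_erase hj)], sum_const,
    card_erase_of_mem (mem_univ i), card_univ, Fintype.card_fin]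
  split_ifs <;> simp

lemma mem_optionSet_vbq {i : Fin n} {L : LinearOrder (Finset K)} {S : Finset K} (s : Finset K)
    (h : ∀ k, k ∈ S ↔ q k ≤ (if k ∈ top L then 1 else 0) + (if k ∈ s then n - 1 else 0)) :
    S ∈ OptionSet (vbq q) i L := by
  refine ⟨Function.update (fun _ => orderWithTopBot s s) i L, Function.update_self .., ?_⟩
  ext k
  rw [mem_vbq, card_mem_top_update_const, top_orderWithTopBot, h]

lemma mem_of_mem_optionSet_vbq {i : Fin n} {L : LinearOrder (Finset K)} {k : K} {x : Finset K}
    (hq : q k ≤ 1) (hk : k ∈ top L) (hx : x ∈ OptionSet (vbq q) i L) : k ∈ x := by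
  obtain ⟨P, rfl, rfl⟩ := hx
  exact mem_vbq.2 (hq.trans (card_pos.2 ⟨i, mem_filter.2 ⟨mem_univ i, hk⟩⟩))

lemma notMem_of_mem_optionSet_vbq {i : Fin n} {L : LinearOrder (Finset K)} {k : K}
    {x : Finset K} (hq : n ≤ q k) (hk : k ∉ top L) (hx : x ∈ OptionSet (vbq q) i L) : k ∉ x := by
  obtain ⟨P, rfl, rfl⟩ := hx
  rw [mem_vbq, not_le]
  calc #{j | k ∈ top (P j)} < #(univ : Finset (Fin n)) :=
        card_lt_card (filter_ssubset.2 ⟨i, mem_univ i, hk⟩)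
    _ ≤ q k := by simpa using hq

lemma nom_vbq (hq : ∀ k, 2 ≤ q k ∧ q k ≤ n - 1) : NOM (vbq (n := n) q) :=
  nom_of_forall_mem_optionSet fun _ _ S => mem_optionSet_vbq S fun k => by
    have := hq k
    by_cases hk : k ∈ S <;> simp only [hk, ↓reduceIte, true_iff, false_iff, not_le] <;> split_ifs <;>
      omega

-- With quota `1`, any report whose top contains `k₀` forces `k₀` into the outcome, so it rules
-- out the truthful worst alternative `{k₁}` (or `∅`), which the others can bring about.
lemma not_nom_vbq_of_quota_eq_one (hn : 2 ≤ n) (hq : ∀ k, 1 ≤ q k) (i : Fin n) {k₀ k₁ : K}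
    (hne : k₁ ≠ k₀) (h : q k₀ = 1) : ¬ NOM (vbq (n := n) q) := by
  have hforced : ∀ x ∈ OptionSet (vbq q) i (orderWithTopBot {k₀} {k₀}), k₀ ∈ x :=
    fun _ => mem_of_mem_optionSet_vbq h.le (by simp [top_orderWithTopBot])
  by_cases hk₁ : q k₁ ≤ n - 1
  · refine not_nom_of_bot_mem_optionSet (singleton_ne_empty k₁).symm ?_
      fun hx => hne.symm (by simpa using hforced _ hx)
    refine mem_optionSet_vbq {k₁} fun k => ?_
    have := hq k
    by_cases hk : k = k₁ <;> simp [hk, top_orderWithTopBot] <;> omega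
  · refine not_nom_of_bot_mem_optionSet (singleton_ne_empty k₁) ?_
      fun hx => by simpa using hforced _ hx
    refine mem_optionSet_vbq ∅ fun k => ?_
    have := hq k
    by_cases hk : k = k₁ <;> simp [hk, top_orderWithTopBot] <;> omega

lemma not_nom_vbq_of_quota_eq_card (hn : 2 ≤ n) (hq : ∀ k, q k ≤ n) (i : Fin n) {k₀ k₁ : K}
    (hne : k₁ ≠ k₀) (h : q k₀ = n) : ¬ NOM (vbq (n := n) q) := by
  have hforced : ∀ x ∈ OptionSet (vbq q) i (orderWithTopBot (univ.erase k₀) (univ.erase k₀)),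
      k₀ ∉ x :=
    fun _ => notMem_of_mem_optionSet_vbq h.ge (by simp [top_orderWithTopBot])
  by_cases hk₁ : 2 ≤ q k₁
  · refine not_nom_of_bot_mem_optionSet (erase_ssubset (mem_univ k₁)).ne' ?_
      fun hx => hforced _ hx (by simpa using hne.symm)
    refine mem_optionSet_vbq (univ.erase k₁) fun k => ?_
    have := hq k
    by_cases hk : k = k₁ <;> simp [hk, top_orderWithTopBot] <;> omega
  · refine not_nom_of_bot_mem_optionSet (erase_ssubset (mem_univ k₁)).ne ?_
      fun hx => hforced _ hx (mem_univ k₀)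
    refine mem_optionSet_vbq univ fun k => ?_
    have := hq k
    by_cases hk : k = k₁ <;> simp [hk, top_orderWithTopBot] <;> omega

end Quota

/-- A voting by quota (with `1 ≤ q_k ≤ n` for each object) is NOM iff
`2 ≤ q_k ≤ n - 1` for every object `k`. -/
theorem vbq_NOM {n : ℕ} {K : Type*} [Fintype K] [DecidableEq K]
    (hn : 2 ≤ n) (hK : 2 ≤ Fintype.card K)
    (q : K → ℕ) (hq : ∀ k, 1 ≤ q k ∧ q k ≤ n) :
    NOM (vbq (n := n) q) ↔ ∀ k : K, 2 ≤ q k ∧ q k ≤ n - 1 := by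
  refine ⟨fun hnom k₀ => ?_, nom_vbq⟩
  obtain ⟨k₁, hne⟩ := Fintype.exists_ne_of_one_lt_card hK k₀
  have i : Fin n := ⟨0, by omega⟩
  by_contra hk₀
  rcases (show q k₀ = 1 ∨ q k₀ = n by have := hq k₀; omega) with h | h
  · exact not_nom_vbq_of_quota_eq_one hn (fun k => (hq k).1) i hne h hnom
  · exact not_nom_vbq_of_quota_eq_card hn (fun k => (hq k).2) i hne h hnom
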